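/- arXiv:1705.08676 — 2 statements merged into one kernel-verified Lean document; each statement's English description precedes it below -/
import Mathlib

section
/- Let P and Q be finite bounded pure posets, f : P → Q a poset fibration, and ≺ a linear order on P. For q ∈ Q let r(q) be the ≺-least element of f^{-1}(q), and define the linear order ≺_f on Q by a ≺_f b iff r(a) ≺ r(b). Suppose that for every q ∈ Q: (i) f^{-1}({x ∈ Q : x < q}) = {p ∈ P : p < r(q)}, and (ii) whenever f^{-1}({x ∈ Q : x > q}) is nonempty, ≺ induces a recursive atom ordering on the bounded poset obtained by adjoining a new minimum to it. If ≺ induces a recursive atom ordering on P, then ≺_f induces a recursive atom ordering on Q. -/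
attribute [local instance] Classical.propDecidable

/-- A finite poset is pure if all of its maximal chains have the same size. -/
def IsPure (α : Type*) [PartialOrder α] : Prop :=
  ∀ s t : Set α, IsMaxChain (· ≤ ·) s → IsMaxChain (· ≤ ·) t → s.ncard = t.ncard

/-- The linear order `prec` induces a recursive atom ordering: ordering the atoms of
every rooted interval `[α,1̂]_c` by `prec` satisfies the two conditions (R1) and (R2)
of a recursive atom ordering.  For `prec`-induced orderings the ordering assigned to a
rooted interval depends only on the top element of the root chain, so (R1) becomes: for
every `β ⋖ t` (`β` the penultimate element of the root chain) and atoms `a, b` of `t`,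
if `a` covers some atom `γ` of `β` with `γ ≺ t` and `b` does not, then `a ≺ b`;
and (R2) becomes: for atoms `a ≺ b` of `t` and any `y` above both, there are an atom
`k ≺ b` of `t` and `z` covering `b` with `k < z ≤ y`. -/
def InducesRAO {α : Type*} [PartialOrder α] (prec : α → α → Prop) : Prop :=
  (∀ β t : α, β ⋖ t → ∀ a b : α, t ⋖ a → t ⋖ b →
    (∃ γ, β ⋖ γ ∧ prec γ t ∧ γ ⋖ a) → ¬ (∃ γ, β ⋖ γ ∧ prec γ t ∧ γ ⋖ b) → prec a b) ∧
  (∀ t a b : α, t ⋖ a → t ⋖ b → prec a b → ∀ y : α, a ≤ y → b ≤ y →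
    ∃ k, t ⋖ k ∧ prec k b ∧ ∃ z, b ⋖ z ∧ z ≤ y ∧ k < z)

/-- Extend a relation on `α` to `WithBot α`, letting the new bottom element precede
every other element. -/
def liftWithBot {α : Type*} (prec : α → α → Prop) (a b : WithBot α) : Prop :=
  (a = ⊥ ∧ b ≠ ⊥) ∨ ∃ x y : α, a = x ∧ b = y ∧ prec x y

/-!
Condition (i) makes `r` an order embedding `Q ↪ P` sending covers to covers, and purity makes `P`
graded by height, so the height-preserving map `f` also sends covers to covers. Each condition of
the induced ordering on `Q` is then obtained by applying it in `P` to the representatives `r ·`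
and pushing the witnesses down along `f`; `≺`-minimality of `r (f p)` in its fibre keeps them
`≺`-small enough.
-/

open Order

section Chains

variable {α : Type*} [PartialOrder α]

lemma height_lt_top_of_finite [Finite α] (x : α) : height x < ⊤ := by
  have := Fintype.ofFinite α
  refine lt_of_le_of_lt (height_le fun p _ ↦ ?_) (ENat.natCast_lt_top (Fintype.card α))
  exact_mod_cast p.length_lt_card.le

lemma coheight_lt_top_of_finite [Finite α] (x : α) : coheight x < ⊤ :=
  height_lt_top_of_finite (α := αᵒᵈ) x

lemma covBy_of_height_eq_add_one {a b : α} (hab : a ≤ b) (hb : height b < ⊤)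
    (h : height b = height a + 1) : a ⋖ b := by
  have ha : height a < ⊤ := (height_mono hab).trans_lt hb
  have hlt : height a < height b := h ▸ ENat.lt_add_one_iff ha.ne |>.mpr le_rfl
  refine ⟨hab.lt_of_ne (by rintro rfl; exact hlt.ne rfl), fun c hac hcb ↦ ?_⟩
  have hc : height a + 1 ≤ height c := height_add_one_le hac
  have hc' : height c < height b := height_strictMono hcb ((height_mono hcb.le).trans_lt hb)
  exact (hc.trans_lt (h ▸ hc')).false

lemma IsChain.ncard_le_height {s : Set α} (hfin : s.Finite) (hs : IsChain (· ≤ ·) s) {x : α}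
    (hx : ∀ y ∈ s, y < x) : (s.ncard : ℕ∞) ≤ height x := by
  induction h : s.ncard generalizing s x with
  | zero => simp
  | succ n ih =>
    obtain ⟨m, hm⟩ := hfin.exists_maximal (Set.nonempty_of_ncard_ne_zero (by omega))
    have hlt : ∀ y ∈ s \ {m}, y < m := fun y ⟨hy, hne⟩ ↦
      ((hs.total hy hm.1).elim id (hm.2 hy)).lt_of_ne hne
    have hcard : (s \ {m}).ncard = n := by
      have := Set.ncard_sdiff_singleton_add_one hm.1 hfin
      omega
    calc ((n + 1 : ℕ) : ℕ∞) = n + 1 := by push_cast; rfl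
      _ ≤ height m + 1 := by gcongr; exact ih hfin.sdiff (hs.mono Set.sdiff_subset) hlt hcard
      _ ≤ height x := height_add_one_le (hx m hm.1)

lemma IsChain.ncard_le_coheight {s : Set α} (hfin : s.Finite) (hs : IsChain (· ≤ ·) s) {x : α}
    (hx : ∀ y ∈ s, x < y) : (s.ncard : ℕ∞) ≤ coheight x :=
  IsChain.ncard_le_height (α := αᵒᵈ) hfin hs.symm hx

end Chains

section Pure

variable {α : Type*} [PartialOrder α] [Finite α]

lemma IsChain.ncard_le_height_add_coheight_of_covBy {s : Set α} (hs : IsChain (· ≤ ·) s)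
    {a b : α} (ha : a ∈ s) (hb : b ∈ s) (hab : a ⋖ b) :
    (s.ncard : ℕ∞) ≤ height a + coheight b + 2 := by
  have hsub : s ⊆ (s ∩ Set.Iio a) ∪ (s ∩ Set.Ioi b) ∪ {a, b} := by
    intro y hy
    have hy' : y ≤ a ∨ b ≤ y := or_iff_not_imp_left.mpr fun hya ↦ by
      have hay : a < y := ((hs.total hy ha).resolve_left hya).lt_of_not_ge hya
      exact (hs.total hy hb).elim (fun hyb ↦ (hyb.lt_or_eq.resolve_left (hab.2 hay)).ge) id
    rcases hy' with hya | hby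
    · rcases hya.lt_or_eq with hya | rfl
      · exact .inl (.inl ⟨hy, hya⟩)
      · exact .inr (.inl rfl)
    · rcases hby.lt_or_eq with hby | rfl
      · exact .inl (.inr ⟨hy, hby⟩)
      · exact .inr (.inr rfl)
  have hlow := (hs.mono Set.inter_subset_left).ncard_le_height (Set.toFinite _)
    fun y (hy : y ∈ s ∩ Set.Iio a) ↦ hy.2
  have hhigh := (hs.mono Set.inter_subset_left).ncard_le_coheight (Set.toFinite _)
    fun y (hy : y ∈ s ∩ Set.Ioi b) ↦ hy.2
  calc (s.ncard : ℕ∞)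
      ≤ ((s ∩ Set.Iio a).ncard + (s ∩ Set.Ioi b).ncard + ({a, b} : Set α).ncard : ℕ) := by
        gcongr
        exact (Set.ncard_le_ncard hsub).trans <| (Set.ncard_union_le _ _).trans <|
          Nat.add_le_add_right (Set.ncard_union_le _ _) _
    _ ≤ height a + coheight b + 2 := by
        push_cast
        gcongr
        exact_mod_cast (Set.ncard_pair hab.ne).le

/-- Compare a maximal chain extending a longest chain through `b` (size `height b + coheight b + 1`)
with a maximal chain through `a ⋖ b` (size at most `height a + coheight b + 2`). -/
lemma IsPure.height_eq_add_one_of_covBy (hα : IsPure α) {a b : α} (hab : a ⋖ b) :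
    height b = height a + 1 := by
  obtain ⟨n, hn⟩ := ENat.ne_top_iff_exists.mp (height_lt_top_of_finite a).ne
  obtain ⟨m, hm⟩ := ENat.ne_top_iff_exists.mp (height_lt_top_of_finite b).ne
  obtain ⟨k, hk⟩ := ENat.ne_top_iff_exists.mp (coheight_lt_top_of_finite b).ne
  obtain ⟨p, hp_last, hp_len⟩ := exists_series_of_height_eq_coe b hm.symm
  obtain ⟨q, hq_head, hq_len⟩ := exists_series_of_coheight_eq_coe b hk.symm
  let pq : LTSeries α := p.smash q (hp_last.trans hq_head.symm)
  obtain ⟨M, hM, hpqM⟩ := pq.monotone.isChain_range.exists_maxChain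
  have hM_card : m + k + 1 ≤ M.ncard := by
    have := Set.ncard_le_ncard hpqM
    rwa [Set.ncard_range_of_injective pq.strictMono.injective, Nat.card_fin,
      RelSeries.smash_length, hp_len, hq_len] at this
  obtain ⟨M', hM', habM'⟩ := (IsChain.pair (r := (· ≤ ·)) hab.le).exists_maxChain
  have hM'_card : M'.ncard ≤ n + k + 2 := by
    have := hM'.isChain.ncard_le_height_add_coheight_of_covBy (habM' (.inl rfl))
      (habM' (.inr rfl)) hab
    rw [← hn, ← hk] at this
    exact_mod_cast this
  have := hα M M' hM hM'
  refine le_antisymm ?_ (height_add_one_le hab.lt)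
  rw [← hm, ← hn]
  exact_mod_cast (by omega : m ≤ n + 1)

end Pure

section Fibration

variable {P Q : Type*} [PartialOrder P] [PartialOrder Q] {f : P → Q}

lemma strictMono_of_height_eq [Finite P] (hmono : Monotone f)
    (hrank : ∀ p, height (f p) = height p) : StrictMono f := fun p p' h ↦
  (hmono h.le).lt_of_ne fun e ↦
    (height_strictMono h (height_lt_top_of_finite p)).ne (by rw [← hrank, ← hrank p', e])

lemma CovBy.map_of_height_eq [Finite P] (hP : IsPure P) (hmono : Monotone f)
    (hrank : ∀ p, height (f p) = height p) {p p' : P} (h : p ⋖ p') : f p ⋖ f p' :=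
  covBy_of_height_eq_add_one (hmono h.le) (hrank p' ▸ height_lt_top_of_finite p')
    (by rw [hrank, hrank, hP.height_eq_add_one_of_covBy h])

variable {r : Q → P}

lemma strictMono_of_preimage_Iio_eq (hr : ∀ q, f (r q) = q)
    (hi : ∀ q, {p | f p < q} = {p | p < r q}) : StrictMono r := fun q q' h ↦
  (Set.ext_iff.mp (hi q') (r q)).mp (show f (r q) < q' by rwa [hr])

lemma covBy_of_preimage_Iio_eq [Finite P] (hr : ∀ q, f (r q) = q)
    (hi : ∀ q, {p | f p < q} = {p | p < r q}) (hmono : Monotone f)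
    (hrank : ∀ p, height (f p) = height p) {q q' : Q} (h : q ⋖ q') : r q ⋖ r q' := by
  refine ⟨strictMono_of_preimage_Iio_eq hr hi h.lt, fun p hqp hpq' ↦ h.2 (c := f p) ?_ ?_⟩
  · simpa only [hr] using strictMono_of_height_eq hmono hrank hqp
  · exact (Set.ext_iff.mp (hi q') p).mpr hpq'

end Fibration

theorem stmt12_general {P Q : Type*} [PartialOrder P] [PartialOrder Q]
    [Fintype P]
    (hP : IsPure P)
    (f : P → Q) (hmono : Monotone f)
    (hrank : ∀ p : P, Order.height (f p) = Order.height p)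
    (prec : P → P → Prop) (hlin : IsStrictTotalOrder P prec)
    (r : Q → P) (hr_mem : ∀ q, f (r q) = q)
    (hr_least : ∀ q p, f p = q → p ≠ r q → prec (r q) p)
    (hi : ∀ q : Q, {p : P | f p < q} = {p : P | p < r q})
    (hRAO : InducesRAO prec) :
    InducesRAO (fun a b : Q => prec (r a) (r b)) := by
  have hr_cov {q q' : Q} (h : q ⋖ q') : r q ⋖ r q' :=
    covBy_of_preimage_Iio_eq hr_mem hi hmono hrank h
  have hf_cov {p p' : P} (h : p ⋖ p') : f p ⋖ f p' := h.map_of_height_eq hP hmono hrank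
  have hr_prec (p p' : P) (h : prec p p') : prec (r (f p)) p' := by
    by_cases he : p = r (f p)
    · rwa [← he]
    · exact hlin.trans _ _ _ (hr_least _ p rfl he) h
  refine ⟨?_, ?_⟩
  · rintro β t hβt a b hta htb ⟨γ, hβγ, hγt, hγa⟩ hb
    refine hRAO.1 _ _ (hr_cov hβt) _ _ (hr_cov hta) (hr_cov htb)
      ⟨r γ, hr_cov hβγ, hγt, hr_cov hγa⟩ ?_
    rintro ⟨γ, hβγ, hγt, hγb⟩
    exact hb ⟨f γ, hr_mem β ▸ hf_cov hβγ, hr_prec γ _ hγt, hr_mem b ▸ hf_cov hγb⟩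
  · rintro t a b hta htb hab y hay hby
    have hr_mono := (strictMono_of_preimage_Iio_eq hr_mem hi).monotone
    obtain ⟨k, htk, hkb, z, hbz, hzy, hkz⟩ :=
      hRAO.2 _ _ _ (hr_cov hta) (hr_cov htb) hab (r y) (hr_mono hay) (hr_mono hby)
    exact ⟨f k, hr_mem t ▸ hf_cov htk, hr_prec k _ hkb, f z, hr_mem b ▸ hf_cov hbz,
      hr_mem y ▸ hmono hzy, strictMono_of_height_eq hmono hrank hkz⟩

/-- Let `f : P → Q` be a poset fibration between finite bounded pure
posets and `≺` a linear order on `P`.  For `q ∈ Q` let `r q` be the `≺`-least element of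
`f⁻¹(q)`, and let `≺_f` be the linear order on `Q` given by `a ≺_f b ↔ r a ≺ r b`.
Suppose for every `q ∈ Q`: (i) `f⁻¹(Q_{<q}) = P_{<r q}`, and (ii) whenever
`f⁻¹(Q_{>q})` is nonempty, `≺` induces a recursive atom ordering on the bounded poset
obtained by adjoining a new minimum to it.  If `≺` induces a recursive atom ordering on
`P`, then `≺_f` induces a recursive atom ordering on `Q`. -/
theorem stmt12 {P Q : Type*} [PartialOrder P] [PartialOrder Q]
    [BoundedOrder P] [BoundedOrder Q] [Fintype P] [Fintype Q]
    (hP : IsPure P) (hQ : IsPure Q)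
    (f : P → Q) (hsurj : Function.Surjective f) (hmono : Monotone f)
    (hrank : ∀ p : P, Order.height (f p) = Order.height p)
    (prec : P → P → Prop) (hlin : IsStrictTotalOrder P prec)
    (r : Q → P) (hr_mem : ∀ q, f (r q) = q)
    (hr_least : ∀ q p, f p = q → p ≠ r q → prec (r q) p)
    (hi : ∀ q : Q, {p : P | f p < q} = {p : P | p < r q})
    (hii : ∀ q : Q, Nonempty {p : P // q < f p} →
      InducesRAO (liftWithBot fun a b : {p : P // q < f p} => prec a.1 b.1))
    (hRAO : InducesRAO prec) :
    InducesRAO (fun a b : Q => prec (r a) (r b)) :=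
  stmt12_general hP f hmono hrank prec hlin r hr_mem hr_least hi hRAO
end

section
/- For words u < w in subword order, μ(u,w) = μ(0̂,1̂ in Â(u,w)) + Σ_{λ : u < λ < w} μ(u,λ) · μ(0̂,1̂ in Â*(λ,w)), where the sum is over all words λ with u < λ < w. -/
/-!
Above a position set `S` the bounded poset `Â(λ,w)` looks like the Boolean interval
`[S, {1,…,|w|}]` with its top renamed `1̂`, so `μ(S,1̂) = (-1)^(|w|-|S|)` and
`μ(0̂,1̂) = -1 - ∑_S (-1)^(|w|-|S|)` for every upward closed family of proper position sets.
Substituting this into the right-hand side and exchanging the sums over `λ` and `S`, the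
coefficient of `(-1)^(|w|-|S|)` is `∑_{u < λ ≤ w|_S} μ(u,λ)`, which is `-1` exactly when
`S ∈ A(u,w)`. These terms cancel the contribution of `Â(u,w)`, and what is left,
`-1 - ∑_{u < λ < w} μ(u,λ)`, is `μ(u,w)` by the defining recurrence.
-/

attribute [local instance] Classical.propDecidable

noncomputable instance {α : Type*} [Fintype α] : Fintype (WithBot α) :=
  inferInstanceAs (Fintype (Option α))
noncomputable instance {α : Type*} [Fintype α] : Fintype (WithTop α) :=
  inferInstanceAs (Fintype (Option α))

/-- The Möbius function of a finite partial order. -/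
noncomputable def mob {α : Type*} [Preorder α] [Fintype α] (a b : α) : ℤ :=
  letI := Classical.decEq α
  letI : @DecidableRel α α (· ≤ ·) := Classical.decRel _
  letI : @DecidableRel α α (· < ·) := Classical.decRel _
  letI : LocallyFiniteOrder α := Fintype.toLocallyFiniteOrder
  IncidenceAlgebra.mu ℤ a b

/-- The bounded poset obtained by adjoining a new minimum `0̂` and maximum `1̂`. -/
abbrev Bd (α : Type*) := WithBot (WithTop α)

/-- The Möbius number `μ(0̂,1̂)` of the bounded poset obtained from a finite poset by
adjoining a new minimum and maximum. -/
noncomputable def mobHat (α : Type*) [Preorder α] [Fintype α] : ℤ :=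
  mob (⊥ : Bd α) ⊤

/-- The subsequence of the word `w` indexed by the set of positions `S`,
taken in increasing position order. -/
def subIdx {A : Type*} (w : List A) (S : Finset (Fin w.length)) : List A :=
  (S.sort (· ≤ ·)).map (w.get ·)

/-- `E u w`: the number of embeddings of `u` in `w`, i.e. of sets of positions of `w`
whose indexed subsequence is `u`. -/
noncomputable def wordE {A : Type*} (u w : List A) : ℕ :=
  (Finset.univ.filter fun S : Finset (Fin w.length) => subIdx w S = u).card

/-- The poset `A*(λ,w)`: all proper subsets `S ⊊ {1,…,|w|}` of positions such that `λ`
is a subsequence of the word `w|_S`, ordered by inclusion. -/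
abbrev AstarW {A : Type*} (w lam : List A) :=
  {S : Finset (Fin w.length) // S ≠ Finset.univ ∧ lam.Sublist (subIdx w S)}

/-- The poset `A(λ,w)`: all proper subsets `S ⊊ {1,…,|w|}` of positions such that `λ`
is a subsequence of the word `w|_S` and `|S| > |λ|`, ordered by inclusion. -/
abbrev AW {A : Type*} (w lam : List A) :=
  {S : Finset (Fin w.length) // S ≠ Finset.univ ∧ lam.length < S.card ∧
    lam.Sublist (subIdx w S)}

open Finset

lemma sum_subtype_univ {ι M : Type*} [Fintype ι] [AddCommMonoid M] {p : ι → Prop}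
    [DecidablePred p] {_ : Fintype {x // p x}} (f : ι → M) :
    ∑ x : {x // p x}, f x = ∑ x ∈ univ.filter p, f x :=
  (sum_subtype _ (by simp) f).symm

lemma sum_bd {α M : Type*} [Fintype α] [AddCommMonoid M] (f : Bd α → M) :
    ∑ y, f y = f ⊥ + (f ⊤ + ∑ x : α, f (x : Bd α)) :=
  (Fintype.sum_option f).trans
    (congrArg (f ⊥ + ·) (Fintype.sum_option fun y : WithTop α => f ↑y))

section Mobius

variable {α : Type*} [PartialOrder α] [Fintype α]

lemma mob_self (a : α) : mob a a = 1 := by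
  let _ : LocallyFiniteOrder α := Fintype.toLocallyFiniteOrder
  exact IncidenceAlgebra.mu_self (𝕜 := ℤ) a

lemma mob_eq_neg_sum_Ioc {a b : α} (hab : a ≠ b) :
    mob a b = -∑ x ∈ univ.filter (fun x => a < x ∧ x ≤ b), mob x b := by
  let _ : LocallyFiniteOrder α := Fintype.toLocallyFiniteOrder
  rw [mob, IncidenceAlgebra.mu_eq_neg_sum_Ioc_of_ne hab]
  congr 2
  ext x
  simp

lemma mob_top_of_ne_top {a : Bd α} (ha : a ≠ ⊤) :
    mob a ⊤ = -1 - ∑ x : α, if a < (x : Bd α) then mob (x : Bd α) ⊤ else 0 := by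
  rw [mob_eq_neg_sum_Ioc ha, sum_filter, sum_bd]
  simp only [not_lt_bot, lt_top_iff_ne_top.2 ha, le_top, le_refl, and_self, and_true,
    if_true, if_false, mob_self, zero_add]
  ring

lemma mobHat_eq_neg_one_sub_sum :
    mobHat α = -1 - ∑ x : α, mob (x : Bd α) ⊤ := by
  simp [mobHat, mob_top_of_ne_top (bot_ne_top : (⊥ : Bd α) ≠ ⊤), bot_lt_iff_ne_bot]

lemma mob_coe_top (a : α) :
    mob (a : Bd α) ⊤
      = -1 - ∑ x : α, if a < x then mob (x : Bd α) ⊤ else 0 := by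
  rw [mob_top_of_ne_top (WithBotTop.coe_ne_top a)]
  simp

end Mobius

section BooleanLattice

variable {ι : Type*} [Fintype ι] [DecidableEq ι]

lemma sum_supset_neg_one_pow_card_compl (S : Finset ι) :
    ∑ B ∈ univ.filter (S ⊆ ·), (-1 : ℤ) ^ #Bᶜ = if S = univ then 1 else 0 := by
  calc ∑ B ∈ univ.filter (S ⊆ ·), (-1 : ℤ) ^ #Bᶜ = ∑ C ∈ Sᶜ.powerset, (-1 : ℤ) ^ #C :=
        sum_nbij' compl compl (by simp) (fun C hC => by simpa [subset_compl_comm] using hC)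
          (by simp) (by simp) (by simp)
    _ = if S = univ then 1 else 0 := by simp [sum_powerset_neg_one_pow_card]

lemma sum_proper_ssupset_neg_one_pow_card_compl {S : Finset ι} (hS : S ≠ univ) :
    ∑ B ∈ univ.filter (fun B => S ⊂ B ∧ B ≠ univ), (-1 : ℤ) ^ #Bᶜ = -1 - (-1) ^ #Sᶜ := by
  have hfilter : univ.filter (fun B => S ⊂ B ∧ B ≠ univ)
      = ((univ.filter (S ⊆ ·)).erase S).erase univ := by
    ext B
    simp only [mem_filter, mem_erase, mem_univ, true_and, ssubset_iff_subset_ne]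
    tauto
  rw [hfilter, sum_erase_eq_sub (by simp [Ne.symm hS]), sum_erase_eq_sub (by simp),
    sum_supset_neg_one_pow_card_compl, if_neg hS]
  simp only [compl_univ, card_empty, pow_zero]
  ring

variable {Q : Finset ι → Prop} [DecidablePred Q]

lemma mob_coe_top_of_monotone (hQ : Monotone Q) (S : {S : Finset ι // S ≠ univ ∧ Q S}) :
    mob (S : Bd {S : Finset ι // S ≠ univ ∧ Q S}) ⊤ = (-1) ^ #S.1ᶜ := by
  induction S using WellFoundedGT.induction with
  | _ S ih =>
  have hsupsets : (univ.filter (fun B => B ≠ univ ∧ Q B)).filter (S.1 ⊂ ·)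
      = univ.filter (fun B => S.1 ⊂ B ∧ B ≠ univ) := by
    ext B
    simp only [mem_filter, mem_univ, true_and]
    exact ⟨fun h => ⟨h.2, h.1.1⟩, fun h => ⟨⟨h.2, hQ h.1.le S.2.2⟩, h.1⟩⟩
  calc _ = -1 - ∑ T : {S : Finset ι // S ≠ univ ∧ Q S},
          if S < T then (-1 : ℤ) ^ #T.1ᶜ else 0 := by
        rw [mob_coe_top]
        congr 1
        refine sum_congr rfl fun T _ => ?_
        split_ifs with h
        exacts [ih T h, rfl]
    _ = -1 - ∑ B ∈ univ.filter (fun B => S.1 ⊂ B ∧ B ≠ univ), (-1 : ℤ) ^ #Bᶜ := by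
        rw [← hsupsets, sum_filter, ← sum_subtype_univ]
        rfl
    _ = (-1) ^ #S.1ᶜ := by
        rw [sum_proper_ssupset_neg_one_pow_card_compl S.2.1]
        ring

lemma mobHat_of_monotone (hQ : Monotone Q) :
    mobHat {S : Finset ι // S ≠ univ ∧ Q S}
      = -1 - ∑ B ∈ univ.filter (fun B => B ≠ univ ∧ Q B), (-1) ^ #Bᶜ := by
  simp_rw [mobHat_eq_neg_one_sub_sum, mob_coe_top_of_monotone hQ]
  rw [sum_subtype_univ fun B => (-1 : ℤ) ^ #Bᶜ]

end BooleanLattice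

open scoped List

lemma List.Sublist.ne_iff_length_lt {α : Type*} {l₁ l₂ : List α} (h : l₁ <+ l₂) :
    l₁ ≠ l₂ ↔ l₁.length < l₂.length := by
  rw [Ne, ← h.length_eq]
  exact h.length_le.lt_iff_ne.symm

section Subwords

variable {A : Type*}

lemma subIdx_mono (w : List A) {S T : Finset (Fin w.length)} (h : S ⊆ T) :
    subIdx w S <+ subIdx w T := by
  refine (List.sublist_of_subperm_of_pairwise ?_ (pairwise_sort _ _) (pairwise_sort _ _)).map _
  exact List.subperm_of_subset (sort_nodup _ _) fun x hx => by simpa using h (by simpa using hx)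

lemma subIdx_univ (w : List A) : subIdx w univ = w := by
  rw [subIdx, Fin.sort_univ, ← List.ofFn_eq_map, List.ofFn_get]

lemma subIdx_length (w : List A) (S : Finset (Fin w.length)) : (subIdx w S).length = #S := by
  simp [subIdx]

lemma subIdx_sublist (w : List A) (S : Finset (Fin w.length)) : subIdx w S <+ w := by
  simpa only [subIdx_univ] using subIdx_mono w (subset_univ S)

lemma mobHat_AstarW (w lam : List A) :
    mobHat (AstarW w lam)
      = -1 - ∑ B ∈ univ.filter (fun B => B ≠ univ ∧ lam <+ subIdx w B), (-1 : ℤ) ^ #Bᶜ :=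
  mobHat_of_monotone (Q := fun S => lam <+ subIdx w S) fun _ _ hST h =>
    h.trans (subIdx_mono w hST)

lemma mobHat_AW (w u : List A) :
    mobHat (AW w u) = -1 - ∑ B ∈ univ.filter
      (fun B => B ≠ univ ∧ u.length < #B ∧ u <+ subIdx w B), (-1 : ℤ) ^ #Bᶜ :=
  mobHat_of_monotone (Q := fun S => u.length < #S ∧ u <+ subIdx w S) fun _ _ hST h =>
    ⟨h.1.trans_le (card_le_card hST), h.2.trans (subIdx_mono w hST)⟩

noncomputable def subwordIcc (u v : List A) : Finset (List A) :=
  v.sublists.toFinset.filter (u.Sublist ·)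

@[simp]
lemma mem_subwordIcc {u v c : List A} : c ∈ subwordIcc u v ↔ u <+ c ∧ c <+ v := by
  simp [subwordIcc, and_comm]

variable {mu : List A → List A → ℤ}

lemma sum_mu_subwordIcc_erase (hmu_self : ∀ u, mu u u = 1)
    (hmu_rec : ∀ u w, u <+ w → u ≠ w → ∑ c ∈ subwordIcc u w, mu u c = 0) (u v : List A) :
    ∑ c ∈ (subwordIcc u v).erase u, mu u c = if u <+ v ∧ u ≠ v then -1 else 0 := by
  split_ifs with huv
  · rw [sum_erase_eq_sub (by simp [huv.1]), hmu_rec u v huv.1 huv.2, hmu_self]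
    norm_num
  · refine sum_eq_zero fun c hc => absurd ?_ huv
    obtain ⟨hcu, huc, hcv⟩ : c ≠ u ∧ u <+ c ∧ c <+ v := by simpa using hc
    exact ⟨huc.trans hcv, fun h => hcu ((h ▸ hcv).antisymm huc)⟩

lemma sum_mu_subwordIoo (hmu_self : ∀ u, mu u u = 1)
    (hmu_rec : ∀ u w, u <+ w → u ≠ w → ∑ c ∈ subwordIcc u w, mu u c = 0) {u w : List A}
    (huw : u <+ w) (hne : u ≠ w) :
    ∑ lam ∈ w.sublists.toFinset.filter (fun lam => u <+ lam ∧ lam ≠ u ∧ lam ≠ w), mu u lam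
      = -1 - mu u w := by
  have hIoo : w.sublists.toFinset.filter (fun lam => u <+ lam ∧ lam ≠ u ∧ lam ≠ w)
      = ((subwordIcc u w).erase u).erase w := by
    ext lam
    simp only [mem_filter, mem_erase, mem_subwordIcc, List.mem_toFinset, List.mem_sublists]
    tauto
  rw [hIoo, sum_erase_eq_sub (by simp [huw, hne.symm]),
    sum_mu_subwordIcc_erase hmu_self hmu_rec, if_pos ⟨huw, hne⟩]

lemma sum_mu_mul_sum_neg_one_pow (hmu_self : ∀ u, mu u u = 1)
    (hmu_rec : ∀ u w, u <+ w → u ≠ w → ∑ c ∈ subwordIcc u w, mu u c = 0) (u w : List A) :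
    ∑ lam ∈ w.sublists.toFinset.filter (fun lam => u <+ lam ∧ lam ≠ u ∧ lam ≠ w),
        mu u lam * ∑ B ∈ univ.filter (fun B => B ≠ univ ∧ lam <+ subIdx w B), (-1 : ℤ) ^ #Bᶜ
      = -∑ B ∈ univ.filter (fun B => B ≠ univ ∧ u.length < #B ∧ u <+ subIdx w B),
          (-1 : ℤ) ^ #Bᶜ := by
  set Lam := w.sublists.toFinset.filter (fun lam => u <+ lam ∧ lam ≠ u ∧ lam ≠ w)
  have hbelow : ∀ B ≠ univ,
      Lam.filter (· <+ subIdx w B) = (subwordIcc u (subIdx w B)).erase u := by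
    intro B hB
    have hlt : (subIdx w B).length < w.length := by
      simpa [subIdx_length] using card_lt_card (ssubset_univ_iff.2 hB)
    ext lam
    simp only [Lam, mem_filter, mem_erase, mem_subwordIcc, List.mem_toFinset, List.mem_sublists]
    constructor
    · rintro ⟨⟨-, hu, hne, -⟩, hB⟩
      exact ⟨hne, hu, hB⟩
    · rintro ⟨hne, hu, hB⟩
      exact ⟨⟨hB.trans (subIdx_sublist w B), hu, hne,
        fun h => hlt.not_ge (h ▸ hB.length_le)⟩, hB⟩
  calc _ = ∑ B ∈ univ.filter (· ≠ univ),
        (∑ lam ∈ Lam.filter (· <+ subIdx w B), mu u lam) * (-1 : ℤ) ^ #Bᶜ := by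
        simp_rw [mul_sum, sum_mul]
        exact sum_comm' fun lam B => by simp only [mem_filter, mem_univ, true_and]; tauto
    _ = ∑ B ∈ univ.filter (· ≠ univ),
        (if u <+ subIdx w B ∧ u ≠ subIdx w B then -1 else 0) * (-1 : ℤ) ^ #Bᶜ := by
        refine sum_congr rfl fun B hB => ?_
        rw [hbelow B (mem_filter.1 hB).2, sum_mu_subwordIcc_erase hmu_self hmu_rec]
    _ = _ := by
        rw [sum_filter, sum_filter, ← sum_neg_distrib]
        refine sum_congr rfl fun B _ => ?_
        by_cases hu : u <+ subIdx w B
        · by_cases hB : B = univ <;> by_cases hlen : u.length < #B <;>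
            simp [hB, hlen, hu, hu.ne_iff_length_lt, subIdx_length]
        · simp [hu]

end Subwords

/-- For words `u < w` in subword order,
`μ(u,w) = μ(0̂,1̂ in Â(u,w)) + ∑_{u < λ < w} μ(u,λ) · μ(0̂,1̂ in Â*(λ,w))`.
The Möbius function `mu` of subword order is characterised by its defining
recurrence. -/
theorem stmt16 {A : Type*} (mu : List A → List A → ℤ)
    (hmu_self : ∀ u : List A, mu u u = 1)
    (hmu_rec : ∀ u w : List A, u.Sublist w → u ≠ w →
      ∑ c ∈ w.sublists.toFinset.filter (fun c => u.Sublist c), mu u c = 0)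
    (u w : List A) (huw : u.Sublist w) (hne : u ≠ w) :
    mu u w = mobHat (AW w u) +
      ∑ lam ∈ w.sublists.toFinset.filter
          (fun lam => u.Sublist lam ∧ lam ≠ u ∧ lam ≠ w),
        mu u lam * mobHat (AstarW w lam) := by
  simp_rw [mobHat_AW, mobHat_AstarW, mul_sub, mul_neg_one, sum_sub_distrib, sum_neg_distrib,
    sum_mu_mul_sum_neg_one_pow hmu_self hmu_rec, sum_mu_subwordIoo hmu_self hmu_rec huw hne]
  ring
end
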